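/- Let q ∈ (1,2] and let U : ℤ → [0,∞) be a bounded nonnegative potential. For every summable f : ℤ → ℝ with f ≥ 0 and every x ∈ ℤ, 0 ≤ |∇̃f|²(x) + U(x)·f(x)² ≤ (2/(q(q−1))) · Γ_{q,U}(f)(x), where Γ_{q,U}(f) = q·f·L_U f − f^{2−q}·L_U(f^q) and L_U = L + M_U with M_U multiplication by U. -/

import Mathlib

open MeasureTheory Real

/-- The kernel `K_s` of the fractional discrete Laplacian on `ℤ`. -/
noncomputable def Ker (s : ℝ) (m : ℤ) : ℝ :=
  if m = 0 then 0
  else ((4 : ℝ) ^ s * Real.Gamma (1 / 2 + s) / (Real.sqrt Real.pi * |Real.Gamma (-s)|)) *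
    (Real.Gamma ((m.natAbs : ℝ) - s) / Real.Gamma ((m.natAbs : ℝ) + 1 + s))

/-- The fractional discrete Laplacian `L = (-Δ)^s` acting pointwise. -/
noncomputable def Lop (s : ℝ) (f : ℤ → ℝ) : ℤ → ℝ :=
  fun x => ∑' y : ℤ, (f x - f y) * Ker s (x - y)

/-- The heat semigroup `P_t = exp (-t L)`, given by the exponential series of the
bounded operator `-tL` (evaluated pointwise). -/
noncomputable def heat (s t : ℝ) (f : ℤ → ℝ) : ℤ → ℝ :=
  fun x => ∑' n : ℕ, ((-t) ^ n / (n.factorial : ℝ)) * ((Lop s)^[n] f x)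

/-- The squared modulus of the gradient, `|∇f|²(x) = Σ_y K_s(y-x) (f x - f y)²`. -/
noncomputable def gradSq (s : ℝ) (f : ℤ → ℝ) (x : ℤ) : ℝ :=
  ∑' y : ℤ, Ker s (y - x) * (f x - f y) ^ 2

/-- The squared modulus of the modified gradient,
`|∇̃f|²(x) = Σ_{y : |f y| < |f x|} K_s(y-x) (f x - f y)²`. -/
noncomputable def mgradSq (s : ℝ) (f : ℤ → ℝ) (x : ℤ) : ℝ :=
  ∑' y : {y : ℤ // |f y| < |f x|}, Ker s ((y : ℤ) - x) * (f x - f (y : ℤ)) ^ 2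

/-- The `ℓ^q` norm on `ℤ` with counting measure (for finite `q`). -/
noncomputable def lqNorm (q : ℝ) (f : ℤ → ℝ) : ℝ :=
  (∑' x : ℤ, |f x| ^ q) ^ (1 / q)

/-- The Schrödinger operator `L_U = L + M_U`, where `M_U` is multiplication by `U`. -/
noncomputable def LopU (s : ℝ) (U : ℤ → ℝ) (f : ℤ → ℝ) : ℤ → ℝ :=
  fun x => Lop s f x + U x * f x

/-- The pseudo-gradient associated with `L_U`:
`Γ_{q,U}(f) = q f · L_U f - f^{2-q} · L_U (f^q)` (real powers). -/
noncomputable def GammaQU (s q : ℝ) (U : ℤ → ℝ) (f : ℤ → ℝ) : ℤ → ℝ :=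
  fun x => q * f x * LopU s U f x - f x ^ (2 - q) * LopU s U (fun y => f y ^ q) x

/-! The Bregman divergence of `t ↦ t ^ q` satisfies, for `1 < q ≤ 2` and `0 ≤ b ≤ a`, the
quadratic lower bound `b ^ q - a ^ q - q a ^ (q - 1) (b - a) ≥ q (q - 1) / 2 · a ^ (q - 2) (a - b) ^ 2`
(Taylor's formula with `ξ ^ (q - 2) ≥ a ^ (q - 2)` for `ξ ≤ a`). Multiplied by `a ^ (2 - q)` and
integrated against the kernel over the `y` with `f y < f x`, this bounds `|∇̃f|²(x)`; the potential
term is the same bound with `b = 0`, as if `U` were a jump to a point where `f` vanishes. -/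

lemma one_sub_rpow_le_mul_one_sub {q t : ℝ} (hq : 1 ≤ q) (ht : 0 ≤ t) :
    1 - t ^ q ≤ q * (1 - t) := by
  have h := one_add_mul_self_le_rpow_one_add (show -1 ≤ t - 1 by linarith) hq
  rw [add_sub_cancel] at h
  linarith

lemma hasDerivAt_rpow_bregman_sub_sq {q : ℝ} (hq : 1 ≤ q) (t : ℝ) :
    HasDerivAt (fun t => q * (1 - t) - (1 - t ^ q) - q * (q - 1) / 2 * (1 - t) ^ 2)
      (q * (t ^ (q - 1) - 1 + (q - 1) * (1 - t))) t := by
  have h1 : HasDerivAt (fun t : ℝ => 1 - t) (-1) t := by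
    simpa using (hasDerivAt_id t).const_sub 1
  exact (((h1.const_mul q).sub ((hasDerivAt_rpow_const (Or.inr hq)).const_sub 1)).sub
    ((h1.fun_pow 2).const_mul (q * (q - 1) / 2))).congr_deriv (by push_cast; ring)

lemma mul_sq_one_sub_le {q t : ℝ} (hq1 : 1 < q) (hq2 : q ≤ 2) (ht0 : 0 ≤ t) (ht1 : t ≤ 1) :
    q * (q - 1) / 2 * (1 - t) ^ 2 ≤ q * (1 - t) - (1 - t ^ q) := by
  have hderiv := hasDerivAt_rpow_bregman_sub_sq hq1.le
  have hanti : AntitoneOn (fun t => q * (1 - t) - (1 - t ^ q) - q * (q - 1) / 2 * (1 - t) ^ 2)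
      (Set.Icc 0 1) := by
    refine antitoneOn_of_hasDerivWithinAt_nonpos (convex_Icc 0 1)
      (fun t _ => (hderiv t).continuousAt.continuousWithinAt)
      (fun t _ => (hderiv t).hasDerivWithinAt) fun t ht => ?_
    rw [interior_Icc] at ht
    -- concavity of `t ↦ t ^ (q - 1)`: it lies below its tangent line at `1`
    have hconc := rpow_one_add_le_one_add_mul_self (show -1 ≤ t - 1 by linarith [ht.1])
      (show 0 ≤ q - 1 by linarith) (by linarith)
    rw [add_sub_cancel] at hconc
    nlinarith
  have h := hanti ⟨ht0, ht1⟩ ⟨zero_le_one, le_rfl⟩ ht1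
  simp only [sub_self, one_rpow] at h
  linarith

/-- `a ^ (2 - q)` times the Bregman divergence `b ^ q - a ^ q - q a ^ (q - 1) (b - a)` of
`t ↦ t ^ q`. -/
noncomputable def gammaQDensity (q a b : ℝ) : ℝ :=
  q * a * (a - b) - a ^ (2 - q) * (a ^ q - b ^ q)

lemma gammaQDensity_eq_sq_mul {q a b : ℝ} (ha : 0 < a) (hb : 0 ≤ b) :
    gammaQDensity q a b = a ^ 2 * (q * (1 - b / a) - (1 - (b / a) ^ q)) := by
  have hpow : a ^ (2 - q) * a ^ q = a ^ 2 := by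
    rw [← rpow_add ha, sub_add_cancel, rpow_two]
  rw [gammaQDensity, div_rpow hb ha.le, ← hpow]
  field_simp
  linear_combination (q * b - q * a) * hpow

lemma gammaQDensity_nonneg {q a b : ℝ} (hq : 1 ≤ q) (ha : 0 ≤ a) (hb : 0 ≤ b) :
    0 ≤ gammaQDensity q a b := by
  rcases ha.eq_or_lt with rfl | ha
  · rw [gammaQDensity, zero_rpow (x := q) (by linarith)]
    simp only [mul_zero, zero_mul, zero_sub, mul_neg, sub_neg_eq_add]
    positivity
  · rw [gammaQDensity_eq_sq_mul ha hb]
    exact mul_nonneg (sq_nonneg a) (sub_nonneg.2 (one_sub_rpow_le_mul_one_sub hq (by positivity)))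

lemma sq_sub_le_gammaQDensity {q a b : ℝ} (hq1 : 1 < q) (hq2 : q ≤ 2) (hb : 0 ≤ b)
    (hba : b ≤ a) : (a - b) ^ 2 ≤ 2 / (q * (q - 1)) * gammaQDensity q a b := by
  have hqq : 0 < q * (q - 1) := mul_pos (by linarith) (by linarith)
  rcases hba.eq_or_lt with rfl | hba
  · rw [sub_self, zero_pow two_ne_zero]
    exact mul_nonneg (by positivity) (gammaQDensity_nonneg hq1.le hb hb)
  have ha : 0 < a := hb.trans_lt hba
  rw [div_mul_eq_mul_div, le_div_iff₀ hqq, gammaQDensity_eq_sq_mul ha hb]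
  have h := mul_sq_one_sub_le hq1 hq2 (div_nonneg hb ha.le) ((div_le_one ha).2 hba.le)
  have hsq : (a - b) ^ 2 = a ^ 2 * (1 - b / a) ^ 2 := by field_simp
  rw [hsq]
  nlinarith [sq_nonneg a]

section Kernel

variable {s : ℝ}

lemma Ker_neg (s : ℝ) (m : ℤ) : Ker s (-m) = Ker s m := by
  simp [Ker]

lemma Ker_sub_comm (s : ℝ) (x y : ℤ) : Ker s (x - y) = Ker s (y - x) := by
  rw [← Ker_neg, neg_sub]

lemma Ker_nonneg (hs0 : 0 < s) (hs1 : s < 1) (m : ℤ) : 0 ≤ Ker s m := by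
  unfold Ker
  split_ifs with hm
  · exact le_rfl
  · have hm : (1 : ℝ) ≤ m.natAbs := by exact_mod_cast Int.natAbs_pos.2 hm
    have hΓ : 0 < Gamma (m.natAbs - s) := Gamma_pos_of_pos (by linarith)
    have hΓ' : 0 < Gamma (1 / 2 + s) := Gamma_pos_of_pos (by linarith)
    positivity

/-- The identity `Γ(x+1) = x Γ(x)` makes the kernel coefficients telescope. -/
lemma Gamma_sub_div_Gamma_add_one_add {x : ℝ} (hs : s ≠ 0) (hxs : 0 < x - s) (hxs' : 0 < x + s) :
    Gamma (x - s) / Gamma (x + 1 + s) =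
      (Gamma (x - s) / Gamma (x + s) - Gamma (x + 1 - s) / Gamma (x + 1 + s)) / (2 * s) := by
  have hΓ : 0 < Gamma (x + s) := Gamma_pos_of_pos hxs'
  rw [show x + 1 - s = x - s + 1 by ring, Gamma_add_one hxs.ne',
    show x + 1 + s = x + s + 1 by ring, Gamma_add_one hxs'.ne']
  field_simp
  ring

lemma summable_Gamma_sub_div_Gamma_add_one_add (hs0 : 0 < s) (hs1 : s < 1) :
    Summable fun n : ℕ => Gamma ((n + 1 : ℕ) - s) / Gamma ((n + 1 : ℕ) + 1 + s) := by
  set r : ℕ → ℝ := fun n => Gamma ((n + 1 : ℕ) - s) / Gamma ((n + 1 : ℕ) + s)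
  have hpos : ∀ n : ℕ, 0 < ((n + 1 : ℕ) : ℝ) - s := fun n => by
    push_cast; linarith [n.cast_nonneg (α := ℝ)]
  have hr : ∀ n, 0 ≤ r n := fun n =>
    div_nonneg (Gamma_pos_of_pos (hpos n)).le (Gamma_pos_of_pos (by positivity)).le
  have htele : ∀ n : ℕ, Gamma ((n + 1 : ℕ) - s) / Gamma ((n + 1 : ℕ) + 1 + s) =
      (r n - r (n + 1)) / (2 * s) := fun n => by
    rw [Gamma_sub_div_Gamma_add_one_add hs0.ne' (hpos n) (by positivity)]
    simp only [r]
    push_cast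
    ring_nf
  refine summable_of_sum_range_le (c := r 0 / (2 * s))
    (fun n => (div_pos (Gamma_pos_of_pos (hpos n)) (Gamma_pos_of_pos (by positivity))).le)
    fun n => ?_
  simp_rw [htele, ← Finset.sum_div, Finset.sum_range_sub']
  gcongr
  linarith [hr n]

lemma summable_Ker (hs0 : 0 < s) (hs1 : s < 1) : Summable (Ker s) := by
  have hnat : Summable fun n : ℕ => Ker s n := by
    rw [← summable_nat_add_iff 1]
    refine ((summable_Gamma_sub_div_Gamma_add_one_add hs0 hs1).mul_left
      ((4 : ℝ) ^ s * Gamma (1 / 2 + s) / (√π * |Gamma (-s)|))).congr fun n => ?_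
    rw [Ker, if_neg (by omega), Int.natAbs_natCast]
  exact .of_nat_of_neg hnat (by simpa only [Ker_neg] using hnat)

lemma summable_sub_mul_Ker (hs0 : 0 < s) (hs1 : s < 1) {g : ℤ → ℝ} {C : ℝ}
    (hg : ∀ y, |g y| ≤ C) (x : ℤ) : Summable fun y => (g x - g y) * Ker s (x - y) := by
  refine .of_norm_bounded
    (((Equiv.subLeft x).summable_iff.2 (summable_Ker hs0 hs1)).mul_left (2 * C))
    fun y => ?_
  rw [norm_mul, Real.norm_of_nonneg (Ker_nonneg hs0 hs1 _), Real.norm_eq_abs, two_mul]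
  exact mul_le_mul_of_nonneg_right ((abs_sub _ _).trans (add_le_add (hg x) (hg y)))
    (Ker_nonneg hs0 hs1 _)

end Kernel

section PseudoGradient

variable {s : ℝ}

lemma hasSum_Ker_mul_gammaQDensity (hs0 : 0 < s) (hs1 : s < 1) {q : ℝ} (hq : 0 ≤ q)
    {f : ℤ → ℝ} {C : ℝ} (hf : ∀ y, |f y| ≤ C) (x : ℤ) :
    HasSum (fun y => Ker s (x - y) * gammaQDensity q (f x) (f y))
      (q * f x * Lop s f x - f x ^ (2 - q) * Lop s (fun y => f y ^ q) x) := by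
  have hfq : ∀ y, |f y ^ q| ≤ C ^ q := fun y =>
    (abs_rpow_le_abs_rpow _ _).trans (rpow_le_rpow (abs_nonneg _) (hf y) hq)
  have h1 := (summable_sub_mul_Ker hs0 hs1 hf x).hasSum.mul_left (q * f x)
  have h2 := (summable_sub_mul_Ker hs0 hs1 hfq x).hasSum.mul_left (f x ^ (2 - q))
  exact (h1.sub h2).congr_fun fun y => by rw [gammaQDensity]; ring

lemma GammaQU_eq_tsum_add (hs0 : 0 < s) (hs1 : s < 1) {q : ℝ} (hq : 0 < q) (U : ℤ → ℝ)
    {f : ℤ → ℝ} {C : ℝ} (hf : ∀ y, |f y| ≤ C) (x : ℤ) :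
    GammaQU s q U f x =
      ∑' y, Ker s (x - y) * gammaQDensity q (f x) (f y) + U x * gammaQDensity q (f x) 0 := by
  rw [(hasSum_Ker_mul_gammaQDensity hs0 hs1 hq.le hf x).tsum_eq, GammaQU, LopU, LopU,
    gammaQDensity, zero_rpow hq.ne']
  ring

lemma mgradSq_nonneg (hs0 : 0 < s) (hs1 : s < 1) (f : ℤ → ℝ) (x : ℤ) : 0 ≤ mgradSq s f x :=
  tsum_nonneg fun _ => mul_nonneg (Ker_nonneg hs0 hs1 _) (sq_nonneg _)

lemma mgradSq_le_tsum (hs0 : 0 < s) (hs1 : s < 1) {f G : ℤ → ℝ} {x : ℤ} (hG : Summable G)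
    (hG0 : ∀ y, 0 ≤ G y) (hle : ∀ y, |f y| < |f x| → Ker s (y - x) * (f x - f y) ^ 2 ≤ G y) :
    mgradSq s f x ≤ ∑' y, G y := by
  have hGsub := hG.subtype {y | |f y| < |f x|}
  have hle' : ∀ y : {y // |f y| < |f x|}, Ker s (y - x) * (f x - f y) ^ 2 ≤ G y :=
    fun y => hle y y.2
  calc mgradSq s f x ≤ ∑' y : {y // |f y| < |f x|}, G y :=
        (hGsub.of_nonneg_of_le (fun _ => mul_nonneg (Ker_nonneg hs0 hs1 _) (sq_nonneg _))
          hle').tsum_le_tsum hle' hGsub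
    _ ≤ ∑' y, G y := hG.tsum_subtype_le G _ hG0

end PseudoGradient

theorem mgradSq_add_potential_le_gammaQU_general (s : ℝ) (hs : s ∈ Set.Ioo (0 : ℝ) 1) (q : ℝ)
    (hq : q ∈ Set.Ioc (1 : ℝ) 2) (U : ℤ → ℝ) (hU0 : ∀ x, 0 ≤ U x)
    (f : ℤ → ℝ) (hf : Summable f) (hf0 : ∀ x, 0 ≤ f x)
    (x : ℤ) :
    0 ≤ mgradSq s f x + U x * f x ^ 2 ∧
      mgradSq s f x + U x * f x ^ 2 ≤ 2 / (q * (q - 1)) * GammaQU s q U f x := by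
  obtain ⟨hs0, hs1⟩ := hs
  obtain ⟨hq1, hq2⟩ := hq
  have hq0 : 0 < q := by linarith
  have hc : 0 ≤ 2 / (q * (q - 1)) := div_nonneg zero_le_two (mul_nonneg (by linarith) (by linarith))
  have hbdd : ∀ y, |f y| ≤ ∑' z, f z := fun y =>
    (abs_of_nonneg (hf0 y)).trans_le (hf.le_tsum y fun z _ => hf0 z)
  have hsum := (hasSum_Ker_mul_gammaQDensity hs0 hs1 hq0.le hbdd x).summable
  have hgrad : mgradSq s f x ≤ ∑' y, 2 / (q * (q - 1)) * (Ker s (x - y) * gammaQDensity q (f x) (f y)) := by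
    refine mgradSq_le_tsum hs0 hs1 (hsum.mul_left _) (fun y => mul_nonneg hc
      (mul_nonneg (Ker_nonneg hs0 hs1 _) (gammaQDensity_nonneg hq1.le (hf0 x) (hf0 y))))
      fun y hy => ?_
    rw [abs_of_nonneg (hf0 y), abs_of_nonneg (hf0 x)] at hy
    rw [Ker_sub_comm, mul_left_comm]
    exact mul_le_mul_of_nonneg_left (sq_sub_le_gammaQDensity hq1 hq2 (hf0 y) hy.le)
      (Ker_nonneg hs0 hs1 _)
  have hpot : U x * f x ^ 2 ≤ 2 / (q * (q - 1)) * (U x * gammaQDensity q (f x) 0) := by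
    have := mul_le_mul_of_nonneg_left (sq_sub_le_gammaQDensity hq1 hq2 le_rfl (hf0 x)) (hU0 x)
    rwa [sub_zero, mul_left_comm] at this
  rw [tsum_mul_left] at hgrad
  refine ⟨add_nonneg (mgradSq_nonneg hs0 hs1 f x) (mul_nonneg (hU0 x) (sq_nonneg _)), ?_⟩
  rw [GammaQU_eq_tsum_add hs0 hs1 hq0 U hbdd x]
  linarith

/-- Pointwise domination of the modified gradient plus potential term by the
Schrödinger pseudo-gradient:
`0 ≤ |∇̃ f|²(x) + U(x) f(x)² ≤ (2/(q(q-1))) Γ_{q,U}(f)(x)`. -/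
theorem mgradSq_add_potential_le_gammaQU (s : ℝ) (hs : s ∈ Set.Ioo (0 : ℝ) 1) (q : ℝ)
    (hq : q ∈ Set.Ioc (1 : ℝ) 2) (U : ℤ → ℝ) (hU0 : ∀ x, 0 ≤ U x)
    (hUbd : ∃ M : ℝ, ∀ x, U x ≤ M) (f : ℤ → ℝ) (hf : Summable f) (hf0 : ∀ x, 0 ≤ f x)
    (x : ℤ) :
    0 ≤ mgradSq s f x + U x * f x ^ 2 ∧
      mgradSq s f x + U x * f x ^ 2 ≤ 2 / (q * (q - 1)) * GammaQU s q U f x :=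
  mgradSq_add_potential_le_gammaQU_general s hs q hq U hU0 f hf hf0 x
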